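/- arXiv:2605.16525 — 2 statements merged into one kernel-verified Lean document; each statement's English description precedes it below -/
import Mathlib

section
/- Let G be a finite digraph with path complex P(G), and let ξ be a primitive N-th root of unity, N ≥ 2. Then every element of Ω_2^N(P(G)) is a ℂ-linear combination of double edges e_{i,j,i}, triangles e_{i,j,k} (where (i,k) is an edge of G), and squares e_{i,j,k} − e_{i,l,k} (where (i,k) is not an edge of G). -/
open scoped BigOperators Classical

/-- `Lam V p` is the free ℂ-vector space on sequences of `p` elements of `V`
(elementary `n`-paths, having `n+1` vertices, live in `Lam V (n+1)`). -/
abbrev Lam (V : Type) (p : ℕ) := (Fin p → V) →₀ ℂ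

/-- A sequence is regular if consecutive entries are different. -/
def RegularPath {V : Type} {p : ℕ} (f : Fin p → V) : Prop :=
  ∀ i j : Fin p, (i : ℕ) + 1 = (j : ℕ) → f i ≠ f j

/-- The regular Mayer boundary `∂(e_{i_0⋯i_n}) = Σ_j ξ^j e_{i_0⋯î_j⋯i_n}`,
where irregular paths in the image are set to `0`. -/
noncomputable def rbdry (V : Type) (ξ : ℂ) (p : ℕ) : Lam V (p + 1) →ₗ[ℂ] Lam V p :=
  Finsupp.lsum ℂ fun f =>
    ∑ j : Fin (p + 1), (ξ ^ (j : ℕ)) •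
      (if RegularPath (f ∘ j.succAbove) then Finsupp.lsingle (f ∘ j.succAbove) else 0)

/-- The regular Mayer boundary in all degrees (zero on `0`-paths). -/
noncomputable def rbdry' (V : Type) (ξ : ℂ) : ∀ p, Lam V p →ₗ[ℂ] Lam V (p - 1)
  | 0 => 0
  | 1 => 0
  | p + 2 => rbdry V ξ (p + 1)

/-- The `r`-fold iterate `∂^r`. -/
noncomputable def rbdryIter (V : Type) (ξ : ℂ) :
    (r : ℕ) → (p : ℕ) → Lam V p →ₗ[ℂ] Lam V (p - r)
  | 0, _ => LinearMap.id
  | r + 1, p => (rbdry' V ξ (p - r)).comp (rbdryIter V ξ r p)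

/-- `𝒜_p`: the span of the allowed paths of a path complex `P`. -/
noncomputable def Allowed (V : Type) (P : ∀ p : ℕ, Set (Fin p → V)) (p : ℕ) : Submodule ℂ (Lam V p) :=
  Finsupp.supported ℂ ℂ (P p)

/-- `Ω^N`: the `∂`-invariant paths,
`Ω_n^N = {v ∈ 𝒜_n : ∂^q v ∈ 𝒜_{n-q} for all 1 ≤ q ≤ N-1}` (the `n`-paths,
with `n+1` vertices, sit in degree `p = n+1` here). -/
def OmegaN (V : Type) (ξ : ℂ) (P : ∀ p : ℕ, Set (Fin p → V)) (N p : ℕ) :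
    Set (Lam V p) :=
  {v | v ∈ Allowed V P p ∧
    ∀ q, 1 ≤ q → q ≤ N - 1 → rbdryIter V ξ q p v ∈ Allowed V P (p - q)}


/-- The path complex of a simple digraph with edge set `E`: allowed `p`-vertex
sequences are directed paths. -/
def digraphPaths (V : Type) (E : Set (V × V)) : ∀ p : ℕ, Set (Fin p → V) :=
  fun p => {f | ∀ i j : Fin p, (i : ℕ) + 1 = (j : ℕ) → (f i, f j) ∈ E}

/-- The generators of `Ω_2^N`: double edges `e_{i,j,i}`, triangles `e_{i,j,k}`
with `(i,k)` an edge, and squares `e_{i,j,k} − e_{i,l,k}` with `(i,k)` not an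
edge (2-paths have 3 vertices, hence live in `Lam V 3`). -/
def Omega2Generators (V : Type) (E : Set (V × V)) : Set (Lam V 3) :=
  {w | (∃ i j : V, (i, j) ∈ E ∧ (j, i) ∈ E ∧ w = Finsupp.single ![i, j, i] (1 : ℂ)) ∨
       (∃ i j k : V, (i, j) ∈ E ∧ (j, k) ∈ E ∧ (i, k) ∈ E ∧
          w = Finsupp.single ![i, j, k] (1 : ℂ)) ∨
       (∃ i j k l : V, j ≠ l ∧ (i, j) ∈ E ∧ (j, k) ∈ E ∧ (i, l) ∈ E ∧ (l, k) ∈ E ∧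
          (i, k) ∉ E ∧
          w = Finsupp.single ![i, j, k] (1 : ℂ) - Finsupp.single ![i, l, k] (1 : ℂ))}

lemma rbdry_apply {V : Type} (ξ : ℂ) (v : Lam V 3) (g : Fin 2 → V) :
    rbdry V ξ 2 v g = ∑ f ∈ v.support, ∑ j : Fin 3, ξ ^ (j : ℕ) *
      (if RegularPath (f ∘ j.succAbove) then (if f ∘ j.succAbove = g then v f else 0) else 0) := by
  rw [rbdry, Finsupp.lsum_apply, Finsupp.sum_apply, Finsupp.sum]
  apply Finset.sum_congr rfl
  intro f _
  rw [LinearMap.sum_apply, Finsupp.finset_sum_apply]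
  apply Finset.sum_congr rfl
  intro j _
  rw [LinearMap.smul_apply, Finsupp.smul_apply, smul_eq_mul]
  congr 1
  by_cases h : RegularPath (f ∘ j.succAbove)
  · simp only [if_pos h, Finsupp.lsingle_apply, Finsupp.single_apply]
  · simp only [if_neg h, LinearMap.zero_apply, Finsupp.coe_zero, Pi.zero_apply]

lemma comp_succAbove_zero {V : Type} (f : Fin 3 → V) :
    f ∘ (0 : Fin 3).succAbove = ![f 1, f 2] := by
  funext x; fin_cases x <;> rfl

lemma comp_succAbove_one {V : Type} (f : Fin 3 → V) :
    f ∘ (1 : Fin 3).succAbove = ![f 0, f 2] := by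
  funext x; fin_cases x <;> rfl

lemma comp_succAbove_two {V : Type} (f : Fin 3 → V) :
    f ∘ (2 : Fin 3).succAbove = ![f 0, f 1] := by
  funext x; fin_cases x <;> rfl

lemma pair_eq_iff {V : Type} (a b i k : V) : ![a, b] = ![i, k] ↔ a = i ∧ b = k := by
  constructor
  · intro h
    exact ⟨congrFun h 0, congrFun h 1⟩
  · rintro ⟨rfl, rfl⟩; rfl

lemma regular_pair {V : Type} {a b : V} (h : a ≠ b) : RegularPath ![a, b] := by
  intro x y hxy
  fin_cases x <;> fin_cases y <;> simp_all

def trip (V : Type) : (V × V × V) ≃ (Fin 3 → V) :=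
  { toFun := fun p => ![p.1, p.2.1, p.2.2]
    invFun := fun f => (f 0, f 1, f 2)
    left_inv := fun p => rfl
    right_inv := fun f => by funext x; fin_cases x <;> rfl }

lemma rbdry_coeff {V : Type} [Fintype V] {E : Set (V × V)} (ξ : ℂ) (v : Lam V 3)
    (hsupp : ∀ f : Fin 3 → V, v f ≠ 0 → (f 0, f 1) ∈ E ∧ (f 1, f 2) ∈ E)
    (i k : V) (hik : i ≠ k) (hikE : (i, k) ∉ E) :
    rbdry V ξ 2 v ![i, k] = ξ * ∑ b : V, v ![i, b, k] := by
  rw [rbdry_apply]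
  have step1 : ∀ f ∈ v.support, (∑ j : Fin 3, ξ ^ (j : ℕ) *
      (if RegularPath (f ∘ j.succAbove) then (if f ∘ j.succAbove = ![i, k] then v f else 0) else 0))
      = (if f 0 = i ∧ f 2 = k then ξ * v f else 0) := by
    intro f hf
    have hfv : v f ≠ 0 := Finsupp.mem_support_iff.1 hf
    obtain ⟨h01, h12⟩ := hsupp f hfv
    rw [Fin.sum_univ_three]
    have t0 : (if RegularPath (f ∘ (0 : Fin 3).succAbove) then
        (if f ∘ (0 : Fin 3).succAbove = ![i, k] then v f else 0) else 0) = 0 := by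
      rw [comp_succAbove_zero]
      have : ¬ (![f 1, f 2] = ![i, k]) := by
        rw [pair_eq_iff]
        rintro ⟨h1, h2⟩
        exact hikE (h1 ▸ h2 ▸ h12)
      simp [this]
    have t2 : (if RegularPath (f ∘ (2 : Fin 3).succAbove) then
        (if f ∘ (2 : Fin 3).succAbove = ![i, k] then v f else 0) else 0) = 0 := by
      rw [comp_succAbove_two]
      have : ¬ (![f 0, f 1] = ![i, k]) := by
        rw [pair_eq_iff]
        rintro ⟨h1, h2⟩
        exact hikE (h1 ▸ h2 ▸ h01)
      simp [this]
    rw [t0, t2, comp_succAbove_one]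
    by_cases hc : f 0 = i ∧ f 2 = k
    · rw [if_pos hc]
      obtain ⟨h1, h2⟩ := hc
      rw [h1, h2, if_pos (regular_pair hik), if_pos rfl]
      simp
    · rw [if_neg hc]
      have hne : ¬ (![f 0, f 2] = ![i, k]) := by
        rw [pair_eq_iff]; exact hc
      simp [hne]
  rw [Finset.sum_congr rfl step1]
  have step2 : ∑ f ∈ v.support, (if f 0 = i ∧ f 2 = k then ξ * v f else 0)
      = ∑ f : Fin 3 → V, (if f 0 = i ∧ f 2 = k then ξ * v f else 0) := by
    apply Finset.sum_subset (Finset.subset_univ _)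
    intro f _ hf
    rw [Finsupp.notMem_support_iff] at hf
    simp [hf]
  rw [step2]
  rw [← Equiv.sum_comp (trip V) (fun f => if f 0 = i ∧ f 2 = k then ξ * v f else 0)]
  have expand : ∀ p : V × V × V, (if (trip V p) 0 = i ∧ (trip V p) 2 = k then ξ * v (trip V p) else 0)
      = (if p.1 = i ∧ p.2.2 = k then ξ * v ![p.1, p.2.1, p.2.2] else 0) := fun p => rfl
  rw [Finset.sum_congr rfl (fun p _ => expand p), Fintype.sum_prod_type]
  have inner2 : ∀ a : V, (∑ q : V × V, if a = i ∧ q.2 = k then ξ * v ![a, q.1, q.2] else 0)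
      = ∑ b : V, ∑ c : V, (if a = i ∧ c = k then ξ * v ![a, b, c] else 0) := by
    intro a
    rw [Fintype.sum_prod_type]
  rw [Finset.sum_congr rfl (fun a _ => inner2 a)]
  have inner3 : ∀ a b : V, (∑ c : V, if a = i ∧ c = k then ξ * v ![a, b, c] else 0)
      = (if a = i then ξ * v ![a, b, k] else 0) := by
    intro a b
    by_cases ha : a = i
    · simp only [ha, true_and]
      rw [Finset.sum_ite_eq' Finset.univ k (fun c => ξ * v ![i, b, c])]
      simp
    · simp [ha]
  rw [Finset.sum_congr rfl (fun a _ => Finset.sum_congr rfl (fun b _ => inner3 a b))]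
  rw [Finset.sum_comm]
  rw [Finset.mul_sum]
  apply Finset.sum_congr rfl
  intro b _
  rw [Finset.sum_ite_eq' Finset.univ i (fun a => ξ * v ![a, b, k])]
  simp


lemma fin3_eta {V : Type} (f : Fin 3 → V) : f = ![f 0, f 1, f 2] := by
  funext x; fin_cases x <;> rfl

lemma key (V : Type) [Fintype V] (E : Set (V × V))
    (n : ℕ) (v : Lam V 3) (hcard : v.support.card ≤ n)
    (hsupp : ∀ f : Fin 3 → V, v f ≠ 0 → (f 0, f 1) ∈ E ∧ (f 1, f 2) ∈ E)
    (hsum : ∀ i k : V, i ≠ k → (i, k) ∉ E → ∑ j : V, v ![i, j, k] = 0) :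
    v ∈ Submodule.span ℂ (Omega2Generators V E) := by
  induction n generalizing v with
  | zero =>
    have : v = 0 := by
      rwa [Nat.le_zero, Finset.card_eq_zero, Finsupp.support_eq_empty] at hcard
    simp [this]
  | succ n ih =>
    by_cases hv0 : v = 0
    · simp [hv0]
    obtain ⟨f, hf⟩ := Finsupp.support_nonempty_iff.2 hv0
    have hfv : v f ≠ 0 := Finsupp.mem_support_iff.1 hf
    set i := f 0 with hi
    set j := f 1 with hj
    set k := f 2 with hk
    have hfe : f = ![i, j, k] := fin3_eta f
    have hij : (i, j) ∈ E := (hsupp f hfv).1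
    have hjk : (j, k) ∈ E := (hsupp f hfv).2
    by_cases hik : i = k ∨ (i, k) ∈ E
    · -- double edge or triangle
      have hw : Finsupp.single f (1:ℂ) ∈ Omega2Generators V E := by
        rcases hik with h | h
        · left; exact ⟨i, j, hij, h ▸ hjk, by rw [hfe, h]⟩
        · right; left; exact ⟨i, j, k, hij, hjk, h, by rw [hfe]⟩
      set v' : Lam V 3 := v - v f • Finsupp.single f 1 with hv'
      have hsub : v'.support ⊆ v.support.erase f := by
        intro g hg
        rw [Finsupp.mem_support_iff] at hg
        rcases eq_or_ne g f with rfl | hgf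
        · exfalso; apply hg; simp [hv', Finsupp.single_apply]
        · refine Finset.mem_erase.2 ⟨hgf, Finsupp.mem_support_iff.2 ?_⟩
          intro h0
          apply hg
          simp [hv', Finsupp.single_apply, h0, Ne.symm hgf]
      have hv'eq : ∀ g, g ≠ f → v' g = v g := by
        intro g hgf
        simp [hv', Finsupp.single_apply, Ne.symm hgf]
      have hmem : v' ∈ Submodule.span ℂ (Omega2Generators V E) := by
        apply ih v'
        · have h1 : v'.support.card < v.support.card :=
            lt_of_le_of_lt (Finset.card_le_card hsub) (Finset.card_erase_lt_of_mem hf)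
          omega
        · intro g hg
          apply hsupp
          intro h0
          apply hg
          rcases eq_or_ne g f with rfl | hgf
          · simp [hv', Finsupp.single_apply, h0]
          · rw [hv'eq g hgf]; exact h0
        · intro a c hac hacE
          rw [← hsum a c hac hacE]
          apply Finset.sum_congr rfl
          intro b _
          apply hv'eq
          intro he
          rw [hfe] at he
          have h0 : a = i := congrFun he 0
          have h2 : c = k := congrFun he 2
          rcases hik with h | h
          · exact hac (h0.trans (h.trans h2.symm))
          · exact hacE (h0 ▸ h2 ▸ h)
      have : v = v' + v f • Finsupp.single f 1 := by simp [hv']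
      rw [this]
      exact Submodule.add_mem _ hmem (Submodule.smul_mem _ _ (Submodule.subset_span hw))
    · push_neg at hik
      obtain ⟨hik, hikE⟩ := hik
      -- find l ≠ j with v ![i,l,k] ≠ 0
      have hsum0 := hsum i k hik hikE
      have hvf : v ![i, j, k] ≠ 0 := by rwa [← hfe]
      have hl : ∃ l, l ≠ j ∧ v ![i, l, k] ≠ 0 := by
        by_contra h
        push_neg at h
        have : ∑ b : V, v ![i, b, k] = v ![i, j, k] := by
          apply Finset.sum_eq_single j
          · intro b _ hb
            by_contra h'
            exact h' (h b hb)
          · intro hj'; exact absurd (Finset.mem_univ j) hj'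
        exact hvf (this ▸ hsum0)
      obtain ⟨l, hlj, hvl⟩ := hl
      set f' : Fin 3 → V := ![i, l, k] with hf'
      have hil : (i, l) ∈ E := (hsupp f' hvl).1
      have hlk : (l, k) ∈ E := by
        have := (hsupp f' hvl).2
        simpa [hf'] using this
      have hff' : f ≠ f' := by
        intro h
        rw [hfe, hf'] at h
        have h1 := congrFun h 1
        simp at h1
        exact hlj h1.symm
      set w : Lam V 3 := Finsupp.single f 1 - Finsupp.single f' 1 with hwdef
      have hw : w ∈ Omega2Generators V E := by
        right; right
        exact ⟨i, j, k, l, hlj.symm, hij, hjk, hil, hlk, hikE, by rw [hwdef, hfe, hf']⟩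
      set v' : Lam V 3 := v - v f • w with hv'
      have hv'eq : ∀ g, g ≠ f → g ≠ f' → v' g = v g := by
        intro g h1 h2
        simp [hv', hwdef, Finsupp.single_apply, Ne.symm h1, Ne.symm h2]
      have hv'f : v' f = 0 := by
        simp [hv', hwdef, Finsupp.single_apply, Ne.symm hff']
      have hsub : v'.support ⊆ v.support.erase f := by
        intro g hg
        rw [Finsupp.mem_support_iff] at hg
        rcases eq_or_ne g f with rfl | hgf
        · exact absurd hv'f hg
        refine Finset.mem_erase.2 ⟨hgf, Finsupp.mem_support_iff.2 ?_⟩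
        rcases eq_or_ne g f' with rfl | hgf'
        · exact hvl
        · intro h0; exact hg (h0 ▸ hv'eq g hgf hgf')
      have hmem : v' ∈ Submodule.span ℂ (Omega2Generators V E) := by
        apply ih v'
        · have h1 : v'.support.card < v.support.card :=
            lt_of_le_of_lt (Finset.card_le_card hsub) (Finset.card_erase_lt_of_mem hf)
          omega
        · intro g hg
          refine hsupp g ?_
          rcases eq_or_ne g f with rfl | h1
          · exact absurd hv'f hg
          rcases eq_or_ne g f' with rfl | h2
          · exact hvl
          · rw [← hv'eq g h1 h2]; exact hg
        · intro a c hac hacE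
          rcases (by tauto : (a = i ∧ c = k) ∨ ¬(a = i ∧ c = k)) with ⟨rfl, rfl⟩ | hne
          · -- sum changes by -v f + v f = 0
            rw [← hsum i k hac hacE]
            have key : ∀ b : V, v' ![i, b, k] = v ![i, b, k]
                - v f * ((if f = ![i,b,k] then 1 else 0) - (if f' = ![i,b,k] then 1 else 0)) := by
              intro b
              simp only [hv', hwdef, Finsupp.sub_apply, Finsupp.smul_apply,
                Finsupp.single_apply, smul_eq_mul]
            simp only [key]
            rw [Finset.sum_sub_distrib, ← Finset.mul_sum, Finset.sum_sub_distrib]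
            have e1 : ∑ b : V, (if f = ![i,b,k] then (1:ℂ) else 0) = 1 := by
              rw [Finset.sum_eq_single j]
              · rw [if_pos hfe]
              · intro b _ hb
                rw [if_neg]
                intro h
                have h1 := congrFun h 1
                simp at h1
                exact hb h1.symm
              · simp
            have e2 : ∑ b : V, (if f' = ![i,b,k] then (1:ℂ) else 0) = 1 := by
              rw [Finset.sum_eq_single l]
              · rw [if_pos hf']
              · intro b _ hb
                rw [if_neg]
                intro h
                rw [hf'] at h
                have h1 := congrFun h 1
                simp at h1
                exact hb h1.symm
              · simp
            rw [e1, e2]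
            ring
          · rw [← hsum a c hac hacE]
            apply Finset.sum_congr rfl
            intro b _
            apply hv'eq
            · intro he
              rw [hfe] at he
              have h0 := congrFun he 0
              have h2 := congrFun he 2
              simp at h0 h2
              exact hne ⟨h0, h2⟩
            · intro he
              rw [hf'] at he
              have h0 := congrFun he 0
              have h2 := congrFun he 2
              simp at h0 h2
              exact hne ⟨h0, h2⟩
      have : v = v' + v f • w := by simp [hv']
      rw [this]
      exact Submodule.add_mem _ hmem (Submodule.smul_mem _ _ (Submodule.subset_span hw))


/-- For a finite simple digraph `G` and a primitive `N`-th root of unity `ξ`,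
`N ≥ 2`, every element of `Ω_2^N(P(G))` is a ℂ-linear combination of double
edges, triangles and squares. -/
theorem omega2_spanned_by_doubleEdges_triangles_squares
    (V : Type) [Fintype V] (E : Set (V × V)) (hsimple : ∀ v : V, (v, v) ∉ E)
    (N : ℕ) (hN : 2 ≤ N) (ξ : ℂ) (hξ : IsPrimitiveRoot ξ N)
    (v : Lam V 3) (hv : v ∈ OmegaN V ξ (digraphPaths V E) N 3) :
    v ∈ Submodule.span ℂ (Omega2Generators V E) := by
  have hmem : ∀ f : Fin 3 → V, v f ≠ 0 → f ∈ digraphPaths V E 3 := by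
    intro f hf
    by_contra hc
    exact hf ((Finsupp.mem_supported' ℂ v).1 hv.1 f hc)
  have hsupp : ∀ f : Fin 3 → V, v f ≠ 0 → (f 0, f 1) ∈ E ∧ (f 1, f 2) ∈ E := by
    intro f hf
    exact ⟨hmem f hf 0 1 rfl, hmem f hf 1 2 rfl⟩
  have hb : rbdry V ξ 2 v ∈ Allowed V (digraphPaths V E) 2 := by
    have h1 := hv.2 1 le_rfl (by omega)
    have h2 : rbdryIter V ξ 1 3 v = rbdry V ξ 2 v := rfl
    rwa [h2] at h1
  have hsum : ∀ i k : V, i ≠ k → (i, k) ∉ E → ∑ b : V, v ![i, b, k] = 0 := by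
    intro i k hik hikE
    have h0 : rbdry V ξ 2 v ![i, k] = 0 := by
      by_contra hc
      have hm : (![i, k] : Fin 2 → V) ∈ digraphPaths V E 2 := by
        by_contra hc2
        exact hc ((Finsupp.mem_supported' ℂ _).1 hb _ hc2)
      exact hikE (hm 0 1 rfl)
    rw [rbdry_coeff ξ v hsupp i k hik hikE] at h0
    rcases mul_eq_zero.1 h0 with h | h
    · exact absurd h (hξ.ne_zero (by omega))
    · exact h
  exact key V E v.support.card v le_rfl hsupp hsum
end

section
/- Let G be a digraph and ξ a primitive N-th root of unity. Every element v of Ω_n^{N,1}(P(G)) decomposes as a sum v = Σ_{a,b} v_{a,b}, where each v_{a,b} is an (a,b)-cluster (a linear combination of n-paths all starting at a and ending at b) and each v_{a,b} itself lies in Ω_n^{N,1}. -/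
open scoped BigOperators Classical

/-- An `(a,b)`-cluster: a linear combination of elementary paths all starting
at `a` and ending at `b`. -/
def IsCluster {V : Type} {n : ℕ} (a b : V) (w : Lam V (n + 1)) : Prop :=
  ∀ f ∈ w.support, f 0 = a ∧ f (Fin.last n) = b

/-!
A face `f ∘ j.succAbove` of a path `f` in a digraph is again a path unless an interior vertex
was removed, and then it has the same endpoints as `f`. So, at a non-allowed `(n-1)`-path `g`,
the boundary of `v` only sees the part of `v` with the endpoints of `g`; hence splitting `v` by
endpoints keeps `∂v ∈ 𝒜_{n-1}` in every summand.
-/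

open Finset

lemma Finsupp.sum_filter_fibers {α β M : Type*} [AddCommMonoid M] [DecidableEq β]
    (v : α →₀ M) (φ : α → β) :
    ∑ b ∈ v.support.image φ, v.filter (fun a => φ a = b) = v := by
  ext a
  simp only [Finsupp.finsetSum_apply, Finsupp.filter_apply, Finset.sum_ite_eq]
  split_ifs with ha
  · rfl
  · exact (Finsupp.notMem_support_iff.mp fun h => ha (mem_image_of_mem φ h)).symm

lemma filter_mem_allowed {V : Type} {P : ∀ p : ℕ, Set (Fin p → V)} {p : ℕ}
    {v : Lam V p} (hv : v ∈ Allowed V P p) (q : (Fin p → V) → Prop)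
    [DecidablePred q] :
    v.filter q ∈ Allowed V P p :=
  (Finsupp.mem_supported ℂ _).mpr fun _ hf =>
    (Finsupp.mem_supported ℂ v).mp hv (mem_filter.mp hf).1

section Digraph

variable {V : Type} {E : Set (V × V)} {m : ℕ}

def endpoints {n : ℕ} (f : Fin (n + 1) → V) : V × V := (f 0, f (Fin.last n))

lemma comp_succ_mem_digraphPaths {f : Fin (m + 1) → V} (hf : f ∈ digraphPaths V E (m + 1)) :
    f ∘ Fin.succ ∈ digraphPaths V E m :=
  fun i j hij => hf i.succ j.succ (by simp [hij])

lemma comp_castSucc_mem_digraphPaths {f : Fin (m + 1) → V}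
    (hf : f ∈ digraphPaths V E (m + 1)) : f ∘ Fin.castSucc ∈ digraphPaths V E m :=
  fun i j hij => hf i.castSucc j.castSucc (by simpa using hij)

lemma endpoints_face_of_not_mem_digraphPaths {f : Fin (m + 2) → V}
    (hf : f ∈ digraphPaths V E (m + 2)) {j : Fin (m + 2)}
    (hj : f ∘ j.succAbove ∉ digraphPaths V E (m + 1)) :
    endpoints (f ∘ j.succAbove) = endpoints f := by
  have h0 : j ≠ 0 := by
    rintro rfl
    exact hj (comp_succ_mem_digraphPaths hf)
  have hlast : j ≠ Fin.last (m + 1) := by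
    rintro rfl
    exact hj (by simpa using comp_castSucc_mem_digraphPaths hf)
  simp [endpoints, Fin.succAbove_ne_zero_zero h0, Fin.succAbove_ne_last_last hlast]

end Digraph

section Boundary

variable {V : Type} {ξ : ℂ}

lemma rbdry_apply_eq_zero_of_forall_face_ne {p : ℕ} (u : Lam V (p + 1)) (g : Fin p → V)
    (h : ∀ f ∈ u.support, ∀ j : Fin (p + 1), f ∘ j.succAbove ≠ g) :
    rbdry V ξ p u g = 0 := by
  rw [rbdry, Finsupp.lsum_apply, Finsupp.sum_apply, Finsupp.sum]
  refine sum_eq_zero fun f hf => ?_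
  rw [LinearMap.sum_apply, Finsupp.finsetSum_apply]
  refine sum_eq_zero fun j _ => ?_
  split_ifs <;> simp [h f hf j]

variable {E : Set (V × V)} {m : ℕ}

lemma rbdry_apply_eq_zero_of_endpoints_ne {u : Lam V (m + 2)}
    (hu : u ∈ Allowed V (digraphPaths V E) (m + 2)) {g : Fin (m + 1) → V}
    (hg : g ∉ digraphPaths V E (m + 1))
    (hends : ∀ f ∈ u.support, endpoints f ≠ endpoints g) :
    rbdry V ξ (m + 1) u g = 0 := by
  refine rbdry_apply_eq_zero_of_forall_face_ne u g fun f hf j hface => hends f hf ?_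
  subst hface
  exact (endpoints_face_of_not_mem_digraphPaths ((Finsupp.mem_supported ℂ u).mp hu hf) hg).symm

end Boundary

section Cluster

variable {V : Type} {n : ℕ}

/-- The `(a,b)`-cluster `v_{a,b}` of `v`. -/
noncomputable def clusterPart (v : Lam V (n + 1)) (ab : V × V) : Lam V (n + 1) :=
  v.filter fun f => endpoints f = ab

lemma isCluster_clusterPart (v : Lam V (n + 1)) (ab : V × V) :
    IsCluster ab.1 ab.2 (clusterPart v ab) := fun _ hf =>
  Prod.ext_iff.mp (mem_filter.mp hf).2

lemma clusterPart_mem_allowed {P : ∀ p : ℕ, Set (Fin p → V)} {v : Lam V (n + 1)}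
    (hv : v ∈ Allowed V P (n + 1)) (ab : V × V) : clusterPart v ab ∈ Allowed V P (n + 1) :=
  filter_mem_allowed hv _

lemma sum_clusterPart (v : Lam V (n + 1)) :
    ∑ ab ∈ v.support.image endpoints, clusterPart v ab = v :=
  v.sum_filter_fibers endpoints

variable {E : Set (V × V)} {ξ : ℂ}

lemma rbdry_clusterPart_mem_allowed {m : ℕ} {v : Lam V (m + 2)}
    (hvA : v ∈ Allowed V (digraphPaths V E) (m + 2))
    (hvO : rbdry V ξ (m + 1) v ∈ Allowed V (digraphPaths V E) (m + 1)) (ab : V × V) :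
    rbdry V ξ (m + 1) (clusterPart v ab) ∈ Allowed V (digraphPaths V E) (m + 1) := by
  refine (Finsupp.mem_supported' ℂ _).mpr fun g hg => ?_
  have hpart := clusterPart_mem_allowed hvA ab
  by_cases hab : endpoints g = ab
  · have hrest : rbdry V ξ (m + 1) (v - clusterPart v ab) g = 0 := by
      refine rbdry_apply_eq_zero_of_endpoints_ne (sub_mem hvA hpart) hg fun f hf hfg => ?_
      rw [Finsupp.mem_support_iff, Finsupp.sub_apply, clusterPart,
        Finsupp.filter_apply_pos (fun f => endpoints f = ab) v (hfg.trans hab), sub_self] at hf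
      exact hf rfl
    rw [map_sub, Finsupp.sub_apply, (Finsupp.mem_supported' ℂ _).mp hvO g hg, zero_sub,
      neg_eq_zero] at hrest
    exact hrest
  · exact rbdry_apply_eq_zero_of_endpoints_ne hpart hg fun f hf hfg =>
      hab (hfg ▸ (mem_filter.mp hf).2)

lemma rbdry'_clusterPart_mem_allowed {v : Lam V (n + 1)}
    (hvA : v ∈ Allowed V (digraphPaths V E) (n + 1))
    (hvO : rbdry' V ξ (n + 1) v ∈ Allowed V (digraphPaths V E) n) (ab : V × V) :
    rbdry' V ξ (n + 1) (clusterPart v ab) ∈ Allowed V (digraphPaths V E) n := by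
  cases n with
  | zero => exact Submodule.zero_mem _
  | succ m => exact rbdry_clusterPart_mem_allowed hvA hvO ab

end Cluster

theorem omegaN1_cluster_decomposition_general (V : Type) (E : Set (V × V))
    (ξ : ℂ) (n : ℕ)
    (v : Lam V (n + 1))
    (hvA : v ∈ Allowed V (digraphPaths V E) (n + 1))
    (hvO : rbdry' V ξ (n + 1) v ∈ Allowed V (digraphPaths V E) n) :
    ∃ (s : Finset (V × V)) (w : V × V → Lam V (n + 1)),
      v = ∑ ab ∈ s, w ab ∧
      ∀ ab ∈ s,
        IsCluster ab.1 ab.2 (w ab) ∧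
        w ab ∈ Allowed V (digraphPaths V E) (n + 1) ∧
        rbdry' V ξ (n + 1) (w ab) ∈ Allowed V (digraphPaths V E) n :=
  ⟨v.support.image endpoints, clusterPart v, (sum_clusterPart v).symm, fun ab _ =>
    ⟨isCluster_clusterPart v ab, clusterPart_mem_allowed hvA ab,
      rbdry'_clusterPart_mem_allowed hvA hvO ab⟩⟩

/-- Every element `v` of `Ω_n^{N,1}(P(G)) = {v ∈ 𝒜_n : ∂v ∈ 𝒜_{n-1}}`
decomposes as a sum `v = Σ_{a,b} v_{a,b}` of `(a,b)`-clusters, each of which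
lies in `Ω_n^{N,1}` (here `n`-paths, having `n+1` vertices, live in
`Lam V (n+1)`). -/
theorem omegaN1_cluster_decomposition (V : Type) (E : Set (V × V))
    (N : ℕ) (hN : 2 ≤ N) (ξ : ℂ) (hξ : IsPrimitiveRoot ξ N) (n : ℕ)
    (v : Lam V (n + 1))
    (hvA : v ∈ Allowed V (digraphPaths V E) (n + 1))
    (hvO : rbdry' V ξ (n + 1) v ∈ Allowed V (digraphPaths V E) n) :
    ∃ (s : Finset (V × V)) (w : V × V → Lam V (n + 1)),
      v = ∑ ab ∈ s, w ab ∧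
      ∀ ab ∈ s,
        IsCluster ab.1 ab.2 (w ab) ∧
        w ab ∈ Allowed V (digraphPaths V E) (n + 1) ∧
        rbdry' V ξ (n + 1) (w ab) ∈ Allowed V (digraphPaths V E) n :=
  omegaN1_cluster_decomposition_general V E ξ n v hvA hvO
end
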